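/- Let a, b, c ∈ Aut(X*) be defined by the wreath recursion a = σ(a,c), b = σ(c,a), c = (a,a). Then c = a⁻² holds in G = ⟨a,b,c⟩, and G is isomorphic to the Klein bottle group ⟨s,t | s² = t²⟩, the homomorphism ⟨s,t | s² = t²⟩ → G determined by s ↦ a, t ↦ b being an isomorphism. Equivalently, setting x = ab⁻¹ one has a⁻¹xa = x⁻¹, both a and x have infinite order, and G = ⟨x, a | a⁻¹ x a = x⁻¹⟩. -/

import Mathlib

/-- `WRec s f f₀ f₁` says that the tree automorphism `f` of the binary rooted tree
`X* = List Bool` is given by the wreath recursion `f = σˢ(f₀, f₁)`: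
the root permutation of `f` is the transposition `σ` when `s = true` and is trivial when
`s = false`, the section of `f` at the letter `0 = false` is `f₀`, and the section of `f`
at the letter `1 = true` is `f₁`. -/
def WRec (s : Bool) (f f₀ f₁ : Equiv.Perm (List Bool)) : Prop :=
  f [] = [] ∧ (∀ w : List Bool, f (false :: w) = s :: f₀ w) ∧
    (∀ w : List Bool, f (true :: w) = (!s) :: f₁ w)

/-- The single defining relator `s² (t²)⁻¹` of the Klein bottle group
`⟨s, t | s² = t²⟩`. -/
def kleinBottleRels : Set (FreeGroup (Fin 2)) :=
  {FreeGroup.of 0 ^ 2 * (FreeGroup.of 1 ^ 2)⁻¹}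

/-!
Unwinding the recursion, `a * a * c`, `c * a * a` and `a * c * a` fix the root and have all their
sections among themselves, so all three are trivial and `c = a⁻²`. Then `a²` and `b²` both have
sections `(a⁻¹, a⁻¹)`, so `a² = b²` and `s ↦ a, t ↦ b` defines a surjection of the Klein bottle
group onto `G`. In the Klein bottle group `s` conjugates `x = s t⁻¹` to `x⁻¹`, so every element
is some `xᵐ sⁿ`. In `G`, `x = a b⁻¹` has sections `(a⁻³, a³)`: for odd `n` the automorphism
`xᵐ aⁿ` moves the vertex `0`, and for `n = 2k` its sections are `a^(-3m-k)` and `a^(3m-k)`.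
Injectivity thus reduces to `a` having infinite order, which holds because odd powers of `a`
move `0` while `a^(2k)` has section `a^(-k)`.
-/

namespace Equiv.Perm

variable {α : Type*}

theorem inv_apply_cons_of_apply_cons {g h : Perm (List α)} {x y : α}
    (hg : ∀ w, g (x :: w) = y :: h w) (w : List α) : g⁻¹ (y :: w) = x :: h⁻¹ w := by
  rw [inv_eq_iff_eq, hg, coe_inv, apply_symm_apply]

theorem zpow_apply_cons_of_apply_cons {g h : Perm (List α)} {x : α}
    (hg : ∀ w, g (x :: w) = x :: h w) (n : ℤ) (w : List α) :
    (g ^ n) (x :: w) = x :: (h ^ n) w := by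
  induction n using Int.induction_on generalizing w with
  | zero => rfl
  | succ n ih => rw [zpow_add_one, mul_apply, hg, ih, zpow_add_one, mul_apply]
  | pred n ih =>
    rw [zpow_sub_one, mul_apply, inv_apply_cons_of_apply_cons hg, ih, zpow_sub_one, mul_apply]

theorem eq_one_of_apply_cons {g h : Perm (List α)} {x : α}
    (hg : ∀ w, g (x :: w) = x :: h w) (h1 : g = 1) : h = 1 :=
  Equiv.ext fun w => by simpa [h1] using (hg w).symm

theorem eq_one_of_sections_mem {S : Set (Perm (List α))} (hnil : ∀ f ∈ S, f [] = [])
    (hcons : ∀ f ∈ S, ∀ x, ∃ g ∈ S, ∀ w, f (x :: w) = x :: g w) {f : Perm (List α)}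
    (hf : f ∈ S) : f = 1 := by
  suffices ∀ w, ∀ f ∈ S, f w = w from Equiv.ext fun w => this w f hf
  intro w
  induction w with
  | nil => exact hnil
  | cons x w ih =>
    intro f hf
    obtain ⟨g, hg, hfg⟩ := hcons f hf x
    rw [hfg, ih g hg]

end Equiv.Perm

section KleinBottleGroup

variable {G : Type*} [Group G] {s t : G}

theorem inv_mul_mul_inv_mul_self_of_sq_eq_sq (h : s ^ 2 = t ^ 2) :
    s⁻¹ * (s * t⁻¹) * s = (s * t⁻¹)⁻¹ := by
  calc s⁻¹ * (s * t⁻¹) * s = t⁻¹ * s ^ 2 * s⁻¹ * s⁻¹ * s := by group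
    _ = (s * t⁻¹)⁻¹ := by rw [h]; group

theorem mul_zpow_mul_inv_of_sq_eq_sq (h : s ^ 2 = t ^ 2) (m : ℤ) :
    s * (s * t⁻¹) ^ m * s⁻¹ = (s * t⁻¹) ^ (-m) := by
  have hconj : s * (s * t⁻¹) * s⁻¹ = (s * t⁻¹)⁻¹ := by
    calc s * (s * t⁻¹) * s⁻¹ = s ^ 2 * t⁻¹ * s⁻¹ := by rw [sq]; group
      _ = (s * t⁻¹)⁻¹ := by rw [h]; group
  rw [← conj_zpow, hconj, inv_zpow, zpow_neg]

theorem exists_eq_zpow_mul_zpow_of_mem_closure (h : s ^ 2 = t ^ 2) {g : G}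
    (hg : g ∈ Subgroup.closure {s, t}) : ∃ m n : ℤ, g = (s * t⁻¹) ^ m * s ^ n := by
  have hs (m : ℤ) : s * (s * t⁻¹) ^ m = (s * t⁻¹) ^ (-m) * s := by
    rw [← mul_zpow_mul_inv_of_sq_eq_sq h, inv_mul_cancel_right]
  have hs' (m : ℤ) : s⁻¹ * (s * t⁻¹) ^ m = (s * t⁻¹) ^ (-m) * s⁻¹ := by
    rw [inv_mul_eq_iff_eq_mul, ← mul_assoc, hs, neg_neg, mul_inv_cancel_right]
  induction hg using Subgroup.closure_induction_left with
  | one => exact ⟨0, 0, by simp⟩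
  | mul_left x hx y hy ih =>
    obtain ⟨m, n, rfl⟩ := ih
    rcases hx with rfl | hx
    · exact ⟨-m, n + 1, by rw [← mul_assoc, hs]; group⟩
    · rw [Set.mem_singleton_iff.1 hx]
      refine ⟨-1 + -m, n + 1, ?_⟩
      calc t * ((s * t⁻¹) ^ m * s ^ n)
          = (s * t⁻¹)⁻¹ * (s * (s * t⁻¹) ^ m) * s ^ n := by group
        _ = _ := by rw [hs, zpow_add, zpow_neg_one]; group
  | inv_mul_cancel x hx y hy ih =>
    obtain ⟨m, n, rfl⟩ := ih
    rcases hx with rfl | hx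
    · exact ⟨-m, n - 1, by rw [← mul_assoc, hs']; group⟩
    · rw [Set.mem_singleton_iff.1 hx]
      refine ⟨-(1 + m), n - 1, ?_⟩
      calc t⁻¹ * ((s * t⁻¹) ^ m * s ^ n)
          = s⁻¹ * ((s * t⁻¹) * (s * t⁻¹) ^ m) * s ^ n := by
            simp only [mul_assoc, inv_mul_cancel_left]
        _ = _ := by rw [← zpow_one_add, hs']; group

namespace Subgroup

theorem closure_pair_eq_closure_mul_inv_pair (s t : G) :
    closure {s, t} = closure {s * t⁻¹, s} := by
  have hs : s ∈ closure {s, t} := subset_closure (by simp)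
  have ht : t ∈ closure {s, t} := subset_closure (by simp)
  have hx : s * t⁻¹ ∈ closure {s * t⁻¹, s} := subset_closure (by simp)
  have hs' : s ∈ closure {s * t⁻¹, s} := subset_closure (by simp)
  apply le_antisymm <;> rw [closure_le, Set.insert_subset_iff, Set.singleton_subset_iff]
  · refine ⟨hs', ?_⟩
    simpa using mul_mem (inv_mem hx) hs'
  · exact ⟨mul_mem hs (inv_mem ht), hs⟩

theorem closure_insert_insert_eq_of_mem {s t u : G} (hu : u ∈ closure {s, t}) :
    closure {s, t, u} = closure {s, t} :=
  closure_eq_of_le _ (by simp [Set.insert_subset_iff, mem_closure_of_mem, hu])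
    (closure_mono (Set.insert_subset_insert (Set.singleton_subset_iff.2 (Set.mem_insert _ _))))

end Subgroup

theorem kleinBottle_of_zero_sq_eq_of_one_sq :
    (PresentedGroup.of 0 : PresentedGroup kleinBottleRels) ^ 2 = PresentedGroup.of 1 ^ 2 := by
  have := PresentedGroup.one_of_mem (rels := kleinBottleRels) rfl
  rwa [map_mul, map_inv, map_pow, map_pow, mul_inv_eq_one] at this

theorem closure_kleinBottle_of_pair_eq_top :
    Subgroup.closure {PresentedGroup.of 0, PresentedGroup.of 1} =
      (⊤ : Subgroup (PresentedGroup kleinBottleRels)) := by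
  rw [← PresentedGroup.closure_range_of]
  congr 1
  ext
  simp [Fin.exists_fin_two, eq_comm]

def kleinBottleLift (h : s ^ 2 = t ^ 2) : PresentedGroup kleinBottleRels →* G :=
  PresentedGroup.toGroup (f := ![s, t]) (by rintro r rfl; simp [h])

@[simp]
theorem kleinBottleLift_of_zero (h : s ^ 2 = t ^ 2) :
    kleinBottleLift h (PresentedGroup.of 0) = s :=
  PresentedGroup.toGroup.of _

@[simp]
theorem kleinBottleLift_of_one (h : s ^ 2 = t ^ 2) :
    kleinBottleLift h (PresentedGroup.of 1) = t :=
  PresentedGroup.toGroup.of _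

theorem range_kleinBottleLift (h : s ^ 2 = t ^ 2) :
    (kleinBottleLift h).range = Subgroup.closure {s, t} := by
  rw [MonoidHom.range_eq_map, ← closure_kleinBottle_of_pair_eq_top, MonoidHom.map_closure,
    Set.image_pair, kleinBottleLift_of_zero, kleinBottleLift_of_one]

theorem kleinBottleLift_injective (h : s ^ 2 = t ^ 2)
    (hfree : ∀ m n : ℤ, (s * t⁻¹) ^ m * s ^ n = 1 → m = 0 ∧ n = 0) :
    Function.Injective (kleinBottleLift h) := by
  refine (injective_iff_map_eq_one _).2 fun g hg => ?_
  obtain ⟨m, n, rfl⟩ :=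
    exists_eq_zpow_mul_zpow_of_mem_closure kleinBottle_of_zero_sq_eq_of_one_sq
      (closure_kleinBottle_of_pair_eq_top ▸ Subgroup.mem_top g)
  obtain ⟨rfl, rfl⟩ := hfree m n (by simpa using hg)
  simp

end KleinBottleGroup

namespace KleinBottleAutomaton

open Equiv.Perm

variable {a b c : Equiv.Perm (List Bool)}

theorem mul_mul_eq_one (ha : WRec true a a c) (hc : WRec false c a a) : a * a * c = 1 := by
  obtain ⟨ha0, ha1, ha2⟩ := ha
  obtain ⟨hc0, hc1, hc2⟩ := hc
  refine eq_one_of_sections_mem (S := {a * a * c, c * a * a, a * c * a}) ?_ ?_ (by simp)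
  · rintro f (rfl | rfl | rfl) <;> simp [ha0, hc0]
  · rintro f (rfl | rfl | rfl) (_ | _)
    · exact ⟨c * a * a, by simp, fun w => by simp [ha1, ha2, hc1]⟩
    · exact ⟨a * c * a, by simp, fun w => by simp [ha1, ha2, hc2]⟩
    · exact ⟨a * c * a, by simp, fun w => by simp [ha1, ha2, hc1]⟩
    · exact ⟨a * a * c, by simp, fun w => by simp [ha1, ha2, hc2]⟩
    · exact ⟨c * a * a, by simp, fun w => by simp [ha1, ha2, hc2]⟩
    · exact ⟨a * a * c, by simp, fun w => by simp [ha1, ha2, hc1]⟩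

theorem eq_inv_mul_inv (ha : WRec true a a c) (hc : WRec false c a a) : c = a⁻¹ * a⁻¹ := by
  rw [eq_inv_of_mul_eq_one_right (mul_mul_eq_one ha hc), mul_inv_rev]

theorem sq_eq_sq (ha : WRec true a a c) (hb : WRec true b c a) (hc : WRec false c a a) :
    a ^ 2 = b ^ 2 := by
  have hc' := eq_inv_mul_inv ha hc
  obtain ⟨ha0, ha1, ha2⟩ := ha
  obtain ⟨hb0, hb1, hb2⟩ := hb
  ext (_ | ⟨_ | _, w⟩) <;> simp [sq, ha0, ha1, ha2, hb0, hb1, hb2, hc']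

theorem sq_apply_cons (ha : WRec true a a c) (hc : WRec false c a a) (x : Bool) (w : List Bool) :
    (a ^ 2) (x :: w) = x :: a⁻¹ w := by
  have hc' := eq_inv_mul_inv ha hc
  obtain ⟨-, ha1, ha2⟩ := ha
  cases x <;> simp [sq, ha1, ha2, hc']

theorem mul_inv_apply_false (ha : WRec true a a c) (hb : WRec true b c a) (hc : WRec false c a a)
    (w : List Bool) : (a * b⁻¹) (false :: w) = false :: (a ^ (-3 : ℤ)) w := by
  have hc' := eq_inv_mul_inv ha hc
  obtain ⟨-, -, ha2⟩ := ha
  obtain ⟨-, -, hb2⟩ := hb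
  rw [mul_apply, inv_apply_cons_of_apply_cons (y := false) hb2]
  simp [ha2, hc', pow_succ]

theorem mul_inv_apply_true (ha : WRec true a a c) (hb : WRec true b c a) (hc : WRec false c a a)
    (w : List Bool) : (a * b⁻¹) (true :: w) = true :: (a ^ (3 : ℤ)) w := by
  have hc' := eq_inv_mul_inv ha hc
  obtain ⟨-, ha1, -⟩ := ha
  obtain ⟨-, hb1, -⟩ := hb
  rw [mul_apply, inv_apply_cons_of_apply_cons hb1]
  simp [ha1, hc', pow_succ]

theorem zpow_two_mul_apply_cons (ha : WRec true a a c) (hc : WRec false c a a) (k : ℤ)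
    (x : Bool) (w : List Bool) : (a ^ (2 * k)) (x :: w) = x :: (a ^ (-k)) w := by
  rw [zpow_mul, zpow_ofNat, zpow_apply_cons_of_apply_cons (sq_apply_cons ha hc x), inv_zpow,
    zpow_neg]

theorem zpow_two_mul_add_one_apply_singleton (ha : WRec true a a c) (hc : WRec false c a a)
    (k : ℤ) : (a ^ (2 * k + 1)) [false] = [true] := by
  rw [zpow_add_one, mul_apply, ha.2.1, ha.1, zpow_two_mul_apply_cons ha hc,
    zpow_apply_eq_self_of_apply_eq_self ha.1]

theorem not_isOfFinOrder (ha : WRec true a a c) (hc : WRec false c a a) : ¬IsOfFinOrder a := by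
  intro hfin
  have hpos := hfin.orderOf_pos
  have h1 : a ^ (orderOf a : ℤ) = 1 := by rw [zpow_natCast, pow_orderOf_eq_one]
  obtain ⟨k, hk | hk⟩ := Nat.even_or_odd' (orderOf a) <;> rw [hk] at h1 <;> push_cast at h1
  · have hk1 : a ^ k = 1 := by
      have := eq_one_of_apply_cons (zpow_two_mul_apply_cons ha hc k true) h1
      rwa [zpow_neg, inv_eq_one, zpow_natCast] at this
    have := orderOf_le_of_pow_eq_one (by omega) hk1
    omega
  · simpa [zpow_two_mul_add_one_apply_singleton ha hc] using DFunLike.congr_fun h1 [false]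

theorem eq_zero_of_zpow_mul_zpow_eq_one (ha : WRec true a a c) (hb : WRec true b c a)
    (hc : WRec false c a a) {m n : ℤ} (h : (a * b⁻¹) ^ m * a ^ n = 1) : m = 0 ∧ n = 0 := by
  have hinj (j : ℤ) (hj : a ^ j = 1) : j = 0 := by
    by_contra hj0
    exact not_isOfFinOrder ha hc (isOfFinOrder_iff_zpow_eq_one.2 ⟨j, hj0, hj⟩)
  obtain ⟨k, rfl | rfl⟩ := Int.even_or_odd' n
  · have hsec (x : Bool) (e : ℤ) (hx : ∀ w, (a * b⁻¹) (x :: w) = x :: (a ^ e) w) :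
        e * m - k = 0 := by
      refine hinj _ (eq_one_of_apply_cons (x := x) (fun w => ?_) h)
      rw [mul_apply, zpow_two_mul_apply_cons ha hc, zpow_apply_cons_of_apply_cons hx,
        sub_eq_add_neg, zpow_add, zpow_mul, mul_apply]
    have h0 := hsec false (-3) (mul_inv_apply_false ha hb hc)
    have h1 := hsec true 3 (mul_inv_apply_true ha hb hc)
    omega
  · have := DFunLike.congr_fun h [false]
    rw [mul_apply, zpow_two_mul_add_one_apply_singleton ha hc,
      zpow_apply_cons_of_apply_cons (mul_inv_apply_true ha hb hc),
      zpow_apply_eq_self_of_apply_eq_self (zpow_apply_eq_self_of_apply_eq_self ha.1 3)] at this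
    simp at this

theorem not_isOfFinOrder_mul_inv (ha : WRec true a a c) (hb : WRec true b c a)
    (hc : WRec false c a a) : ¬IsOfFinOrder (a * b⁻¹) := by
  intro hfin
  obtain ⟨m, hm0, hm⟩ := isOfFinOrder_iff_zpow_eq_one.1 hfin
  exact hm0 (eq_zero_of_zpow_mul_zpow_eq_one ha hb hc (n := 0) (by simpa using hm)).1

end KleinBottleAutomaton

open KleinBottleAutomaton

/-- Let `a, b, c` be the tree automorphisms defined by the wreath
recursion `a = σ(a,c)`, `b = σ(c,a)`, `c = (a,a)`.  Then `c = a⁻²` holds in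
`G = ⟨a,b,c⟩`, and `G` is isomorphic to the Klein bottle group `⟨s, t | s² = t²⟩` via
the homomorphism determined by `s ↦ a`, `t ↦ b`.  Equivalently, setting `x = ab⁻¹` one
has `a⁻¹xa = x⁻¹`, both `a` and `x` have infinite order, and `G = ⟨x, a⟩`. -/
theorem generates_klein_bottle_group (a b c : Equiv.Perm (List Bool))
    (ha : WRec true a a c) (hb : WRec true b c a) (hc : WRec false c a a) :
    c = a ^ (-2 : ℤ) ∧
    (∃ ψ : PresentedGroup kleinBottleRels →* Subgroup.closure {a, b, c},
      Function.Bijective ψ ∧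
      (ψ (PresentedGroup.of 0) : Equiv.Perm (List Bool)) = a ∧
      (ψ (PresentedGroup.of 1) : Equiv.Perm (List Bool)) = b) ∧
    a⁻¹ * (a * b⁻¹) * a = (a * b⁻¹)⁻¹ ∧
    ¬ IsOfFinOrder a ∧
    ¬ IsOfFinOrder (a * b⁻¹) ∧
    Subgroup.closure {a, b, c} = Subgroup.closure {a * b⁻¹, a} := by
  have hsq := sq_eq_sq ha hb hc
  have hclosure : Subgroup.closure {a, b, c} = Subgroup.closure {a, b} := by
    refine Subgroup.closure_insert_insert_eq_of_mem ?_
    have ha_mem : a ∈ Subgroup.closure {a, b} := Subgroup.subset_closure (by simp)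
    rw [eq_inv_mul_inv ha hc]
    exact mul_mem (inv_mem ha_mem) (inv_mem ha_mem)
  let e := MulEquiv.subgroupCongr ((range_kleinBottleLift hsq).trans hclosure.symm)
  let ψ := e.toMonoidHom.comp (kleinBottleLift hsq).rangeRestrict
  have hψ : Function.Bijective ψ :=
    e.bijective.comp ⟨MonoidHom.rangeRestrict_injective_iff.2
      (kleinBottleLift_injective hsq fun _ _ => eq_zero_of_zpow_mul_zpow_eq_one ha hb hc),
      MonoidHom.rangeRestrict_surjective _⟩
  refine ⟨by rw [eq_inv_mul_inv ha hc]; group, ⟨ψ, hψ, by simp [ψ, e], by simp [ψ, e]⟩,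
    inv_mul_mul_inv_mul_self_of_sq_eq_sq hsq, not_isOfFinOrder ha hc,
    not_isOfFinOrder_mul_inv ha hb hc,
    hclosure.trans (Subgroup.closure_pair_eq_closure_mul_inv_pair a b)⟩
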